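/- arXiv:math/0608579 — 4 statements merged into one kernel-verified Lean document; each statement's English description precedes it below -/
import Mathlib

section
/- Let k be an algebraically closed field and n ≥ 3. Let e = Σ_{j=2}^{n-1} E_{j,j+1} and let B be the group of upper triangular n×n matrices over k of determinant 1. Then the conjugation orbit { g·e·g^{-1} : g ∈ B } equals the set of all strictly upper triangular n×n matrices x with x_{1,2} = 0 and x_{j,j+1} ≠ 0 for all j with 2 ≤ j ≤ n−1 (the entries x_{a,b} with b ≥ a+2 being arbitrary). -/
/-!
Conjugating by an upper triangular `g` keeps a matrix strictly upper triangular and multiplies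
its `(a, a+1)` entry by the nonzero scalar `g_{aa} (g⁻¹)_{a+1,a+1}`, so the orbit of `e` lies in
the set. Conversely, for `x` in the set, `x ^ (n - 1) = 0` because the first row of `x` starts at
column 3. The upper triangular matrix `g` with first column `c e₁` and `b`-th column
`x ^ (n - b) eₙ` for `b ≥ 2` then satisfies `x g = g e`; its diagonal entries
`(x ^ (n - b))_{b,n}` are products of superdiagonal entries of `x`, hence nonzero, and `c` is
chosen to make `det g = 1`.
-/

open Matrix

/-- Indices are `1`-based as in the paper: the `1` of `Emat n k a b` sits at `(a - 1, b - 1)`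
in `Fin n`. -/
def Emat (n : ℕ) (k : Type*) [Field k] (a b : ℕ) : Matrix (Fin n) (Fin n) k :=
  Matrix.of fun p q => if (p : ℕ) + 1 = a ∧ (q : ℕ) + 1 = b then 1 else 0

def IsUpperTri {n : ℕ} {k : Type*} [Field k] (g : Matrix (Fin n) (Fin n) k) : Prop :=
  ∀ a b : Fin n, (b : ℕ) < (a : ℕ) → g a b = 0

def IsStrictUpperTri {n : ℕ} {k : Type*} [Field k] (x : Matrix (Fin n) (Fin n) k) : Prop :=
  ∀ a b : Fin n, (b : ℕ) ≤ (a : ℕ) → x a b = 0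

def Borbit {n : ℕ} {k : Type*} [Field k] (e : Matrix (Fin n) (Fin n) k) :
    Set (Matrix (Fin n) (Fin n) k) :=
  { x | ∃ g : Matrix (Fin n) (Fin n) k, IsUpperTri g ∧ g.det = 1 ∧ x = g * e * g⁻¹ }

/-- `x` is supported on and above the `d`-th superdiagonal: upper triangular for `d = 0`,
strictly upper triangular for `d = 1`. -/
def IsUpperTriAbove {n : ℕ} {R : Type*} [Zero R] (d : ℕ) (x : Matrix (Fin n) (Fin n) R) :
    Prop :=
  ∀ a b : Fin n, (b : ℕ) < a + d → x a b = 0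

namespace IsUpperTriAbove

variable {n : ℕ} {R : Type*} {d d' : ℕ} {x y : Matrix (Fin n) (Fin n) R}

section NonUnital

variable [NonUnitalNonAssocSemiring R]

theorem mul (hx : IsUpperTriAbove d x) (hy : IsUpperTriAbove d' y) :
    IsUpperTriAbove (d + d') (x * y) := by
  intro a c hac
  rw [mul_apply]
  refine Finset.sum_eq_zero fun b _ => ?_
  by_cases hab : (b : ℕ) < a + d
  · rw [hx a b hab, zero_mul]
  · rw [hy b c (by omega), mul_zero]

theorem mul_apply_of_eq_add (hx : IsUpperTriAbove d x) (hy : IsUpperTriAbove d' y)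
    {a b c : Fin n} (hb : (b : ℕ) = a + d) (hc : (c : ℕ) = b + d') :
    (x * y) a c = x a b * y b c := by
  rw [mul_apply]
  refine Finset.sum_eq_single b (fun i _ hib => ?_) (by simp)
  rcases Nat.lt_or_gt_of_ne (Fin.val_ne_of_ne hib) with h | h
  · rw [hx a i (by omega), zero_mul]
  · rw [hy i c (by omega), mul_zero]

end NonUnital

section Semiring

variable [Semiring R]

theorem pow (hx : IsUpperTriAbove d x) : ∀ m : ℕ, IsUpperTriAbove (d * m) (x ^ m)
  | 0 => fun _ _ h => one_apply_ne (Fin.ne_of_gt h)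
  | m + 1 => by rw [pow_succ, mul_add, mul_one]; exact (hx.pow m).mul hx

theorem pow_apply_ne_zero [NoZeroDivisors R] [Nontrivial R] (hx : IsUpperTriAbove 1 x)
    {a : Fin n} (hsd : ∀ i j : Fin n, (a : ℕ) ≤ i → (j : ℕ) = i + 1 → x i j ≠ 0) :
    ∀ (m : ℕ) (b : Fin n), (b : ℕ) = a + m → (x ^ m) a b ≠ 0
  | 0, b, hb => by simp [Fin.ext (a := a) (b := b) (by omega)]
  | m + 1, b, hb => by
    let c : Fin n := ⟨a + m, by omega⟩
    rw [pow_succ, (hx.pow m).mul_apply_of_eq_add hx (b := c) (by simp [c]) (by simp [c]; omega)]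
    exact mul_ne_zero (pow_apply_ne_zero hx hsd m c rfl)
      (hsd c b (by simp [c]) (by simp [c]; omega))

theorem pow_pred_eq_zero (hn : 2 ≤ n) (hx : IsUpperTriAbove 1 x)
    (h01 : x ⟨0, by omega⟩ ⟨1, by omega⟩ = 0) : x ^ (n - 1) = 0 := by
  have hpow := hx.pow (n - 2)
  ext a b
  rw [show n - 1 = 1 + (n - 2) by omega, pow_add, pow_one, Matrix.zero_apply]
  by_cases ha : (a : ℕ) = 0
  · rw [mul_apply]
    refine Finset.sum_eq_zero fun i _ => ?_
    rcases Nat.lt_or_ge (i : ℕ) 2 with hi | hi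
    · obtain hi0 | hi1 : (i : ℕ) = 0 ∨ (i : ℕ) = 1 := by omega
      · rw [hx _ i (by omega), zero_mul]
      · rw [show a = ⟨0, by omega⟩ from Fin.ext ha, show i = ⟨1, by omega⟩ from Fin.ext hi1, h01,
          zero_mul]
    · rw [hpow i b (by omega), mul_zero]
  · exact hx.mul hpow a b (by omega)

end Semiring

end IsUpperTriAbove

section Field

variable {n : ℕ} {k : Type*} [Field k]

theorem isUpperTriAbove_zero_iff {g : Matrix (Fin n) (Fin n) k} :
    IsUpperTriAbove 0 g ↔ IsUpperTri g :=
  Iff.rfl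

theorem isUpperTriAbove_one_iff {x : Matrix (Fin n) (Fin n) k} :
    IsUpperTriAbove 1 x ↔ IsStrictUpperTri x :=
  forall₂_congr fun _ _ => by rw [Nat.lt_succ_iff]

theorem IsUpperTri.isUpperTriangular {g : Matrix (Fin n) (Fin n) k} (hg : IsUpperTri g) :
    g.IsUpperTriangular :=
  fun _ _ => hg _ _

theorem IsUpperTri.inv {g : Matrix (Fin n) (Fin n) k} (hg : IsUpperTri g) : IsUpperTri g⁻¹ := by
  by_cases hdet : IsUnit g.det
  · have := g.invertibleOfIsUnitDet hdet
    exact fun a b hab => blockTriangular_inv_of_blockTriangular hg.isUpperTriangular hab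
  · rw [nonsing_inv_apply_not_isUnit g hdet]
    exact fun _ _ _ => rfl

theorem IsUpperTri.inv_diag_mul_diag {g : Matrix (Fin n) (Fin n) k}
    (hg : IsUpperTri g) (hdet : IsUnit g.det) (a : Fin n) : g⁻¹ a a * g a a = 1 := by
  have hg0 := isUpperTriAbove_zero_iff.2 hg
  have hginv0 := isUpperTriAbove_zero_iff.2 hg.inv
  rw [← hginv0.mul_apply_of_eq_add hg0 rfl rfl, nonsing_inv_mul g hdet, one_apply_eq]

def subregularNilpotent (n : ℕ) (k : Type*) [Field k] : Matrix (Fin n) (Fin n) k :=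
  ∑ j ∈ Finset.Icc 2 (n - 1), Emat n k j (j + 1)

theorem subregularNilpotent_apply (p q : Fin n) :
    subregularNilpotent n k p q = if 1 ≤ (p : ℕ) ∧ (q : ℕ) = p + 1 then 1 else 0 := by
  have hEmat : ∀ j : ℕ, Emat n k j (j + 1) p q =
      if j = p + 1 then (if (q : ℕ) = p + 1 then 1 else 0) else 0 := by
    intro j
    simp only [Emat, of_apply]
    split_ifs <;> first | rfl | omega
  rw [subregularNilpotent, Matrix.sum_apply, Finset.sum_congr rfl fun j _ => hEmat j,
    Finset.sum_ite_eq']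
  have := q.isLt
  simp only [Finset.mem_Icc]
  split_ifs <;> first | rfl | omega

theorem isUpperTriAbove_one_subregularNilpotent : IsUpperTriAbove 1 (subregularNilpotent n k) :=
  fun p q hpq => by rw [subregularNilpotent_apply, if_neg (by omega)]

theorem mul_subregularNilpotent_apply (M : Matrix (Fin n) (Fin n) k) (a b : Fin n) :
    (M * subregularNilpotent n k) a b =
      if h : 2 ≤ (b : ℕ) then M a ⟨b - 1, by omega⟩ else 0 := by
  simp_rw [mul_apply, subregularNilpotent_apply, mul_ite, mul_one, mul_zero]
  split_ifs with hb
  · rw [Finset.sum_eq_single ⟨b - 1, by omega⟩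
      (fun i _ hi => if_neg fun h => hi (Fin.ext (by simp; omega))) (by simp),
      if_pos (by simp; omega)]
  · exact Finset.sum_eq_zero fun i _ => if_neg (by omega)

theorem conj_subregularNilpotent_mem (hn : 2 ≤ n) {g : Matrix (Fin n) (Fin n) k}
    (hg : IsUpperTri g) (hdet : IsUnit g.det) :
    IsStrictUpperTri (g * subregularNilpotent n k * g⁻¹) ∧
      (g * subregularNilpotent n k * g⁻¹) ⟨0, by omega⟩ ⟨1, by omega⟩ = 0 ∧
      ∀ a b : Fin n, 1 ≤ (a : ℕ) → (b : ℕ) = a + 1 →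
        (g * subregularNilpotent n k * g⁻¹) a b ≠ 0 := by
  have hg0 := isUpperTriAbove_zero_iff.2 hg
  have hge := hg0.mul isUpperTriAbove_one_subregularNilpotent
  have hginv0 := isUpperTriAbove_zero_iff.2 hg.inv
  have hsuperdiag : ∀ a b : Fin n, (b : ℕ) = a + 1 → (g * subregularNilpotent n k * g⁻¹) a b =
      g a a * subregularNilpotent n k a b * g⁻¹ b b := fun a b hb => by
    rw [hge.mul_apply_of_eq_add hginv0 (b := b) hb rfl,
      hg0.mul_apply_of_eq_add isUpperTriAbove_one_subregularNilpotent rfl hb]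
  refine ⟨isUpperTriAbove_one_iff.1 (hge.mul hginv0), ?_, fun a b ha hb => ?_⟩
  · rw [hsuperdiag _ _ rfl, subregularNilpotent_apply, if_neg (by simp), mul_zero, zero_mul]
  · rw [hsuperdiag a b hb, subregularNilpotent_apply, if_pos ⟨ha, hb⟩, mul_one]
    exact mul_ne_zero (right_ne_zero_of_mul_eq_one (hg.inv_diag_mul_diag hdet a))
      (left_ne_zero_of_mul_eq_one (hg.inv_diag_mul_diag hdet b))

/-- In `0`-based indices: column `b ≥ 1` is the Krylov vector `x ^ (n - 1 - b) eₗ` and column `0`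
is `c e₀`. For `l = n - 1` this matrix conjugates `e` to `x`; the scalar `c` adjusts its
determinant. -/
def krylovMatrix (x : Matrix (Fin n) (Fin n) k) (l : Fin n) (c : k) : Matrix (Fin n) (Fin n) k :=
  of fun a b => if (b : ℕ) = 0 then (if (a : ℕ) = 0 then c else 0) else (x ^ (n - 1 - b)) a l

variable {x : Matrix (Fin n) (Fin n) k} {l : Fin n} (c : k)

theorem isUpperTri_krylovMatrix (hx : IsUpperTriAbove 1 x) (hl : (l : ℕ) = n - 1) :
    IsUpperTri (krylovMatrix x l c) := by
  intro a b hba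
  simp only [krylovMatrix, of_apply]
  split_ifs with hb ha
  · omega
  · rfl
  · exact hx.pow _ a l (by omega)

theorem det_krylovMatrix (hx : IsUpperTriAbove 1 x) (hl : (l : ℕ) = n - 1) {z : Fin n}
    (hz : (z : ℕ) = 0) :
    (krylovMatrix x l c).det = c * ∏ j ∈ Finset.univ.erase z, (x ^ (n - 1 - j)) j l := by
  rw [det_of_isUpperTriangular (isUpperTri_krylovMatrix c hx hl).isUpperTriangular,
    ← Finset.mul_prod_erase _ _ (Finset.mem_univ z)]
  congr 1
  · simp [krylovMatrix, hz]
  · refine Finset.prod_congr rfl fun j hj => ?_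
    have : (j : ℕ) ≠ 0 := fun h => Finset.ne_of_mem_erase hj (Fin.ext (h.trans hz.symm))
    simp [krylovMatrix, this]

theorem mul_krylovMatrix (hn : 2 ≤ n) (hx : IsUpperTriAbove 1 x)
    (h01 : x ⟨0, by omega⟩ ⟨1, by omega⟩ = 0) (hl : (l : ℕ) = n - 1) :
    x * krylovMatrix x l c = krylovMatrix x l c * subregularNilpotent n k := by
  ext a b
  rw [mul_subregularNilpotent_apply]
  by_cases hb0 : (b : ℕ) = 0
  · rw [dif_neg (by omega), mul_apply]
    refine Finset.sum_eq_zero fun i _ => ?_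
    by_cases hi : (i : ℕ) = 0
    · rw [hx a i (by omega), zero_mul]
    · simp [krylovMatrix, hb0, hi]
  · have hcol : (x * krylovMatrix x l c) a b = (x ^ (n - b)) a l := by
      simp only [mul_apply, krylovMatrix, of_apply, if_neg hb0]
      rw [← mul_apply, ← pow_succ', show n - 1 - b + 1 = n - b by omega]
    rw [hcol]
    split_ifs with hb2
    · simp only [krylovMatrix, of_apply, if_neg (show b.val - 1 ≠ 0 by omega)]
      rw [show n - 1 - (b - 1) = n - b by omega]
    · rw [show n - b = n - 1 by omega, hx.pow_pred_eq_zero hn h01, Matrix.zero_apply]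

theorem exists_conj_subregularNilpotent (hn : 2 ≤ n) (hx : IsUpperTriAbove 1 x)
    (h01 : x ⟨0, by omega⟩ ⟨1, by omega⟩ = 0)
    (hsd : ∀ a b : Fin n, 1 ≤ (a : ℕ) → (b : ℕ) = a + 1 → x a b ≠ 0) :
    ∃ g, IsUpperTri g ∧ g.det = 1 ∧ x = g * subregularNilpotent n k * g⁻¹ := by
  let l : Fin n := ⟨n - 1, by omega⟩
  let z : Fin n := ⟨0, by omega⟩
  set D := ∏ j ∈ Finset.univ.erase z, (x ^ (n - 1 - j)) j l
  have hD : D ≠ 0 := Finset.prod_ne_zero_iff.2 fun j hj => by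
    have : (j : ℕ) ≠ 0 := fun h => Finset.ne_of_mem_erase hj (Fin.ext h)
    exact hx.pow_apply_ne_zero (fun i i' hi => hsd i i' (by omega)) _ l (by simp [l]; omega)
  have hdet : (krylovMatrix x l D⁻¹).det = 1 := by
    rw [det_krylovMatrix _ hx rfl (z := z) rfl, inv_mul_cancel₀ hD]
  refine ⟨krylovMatrix x l D⁻¹, isUpperTri_krylovMatrix _ hx rfl, hdet, ?_⟩
  rw [← mul_krylovMatrix _ hn hx h01 rfl, mul_nonsing_inv_cancel_right _ _ (hdet ▸ isUnit_one)]

end Field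

/-- For `n ≥ 3` and `e = Σ_{j=2}^{n-1} E_{j,j+1}`, the `B`-orbit of `e` is exactly the set
of strictly upper triangular matrices `x` with `x_{1,2} = 0` and `x_{j,j+1} ≠ 0` for
`2 ≤ j ≤ n-1` (all other entries above the diagonal being arbitrary). -/
theorem Borbit_of_subregular_first_node {k : Type*} [Field k] {n : ℕ}
    (hn : 3 ≤ n) (e : Matrix (Fin n) (Fin n) k)
    (he : e = ∑ j ∈ Finset.Icc 2 (n - 1), Emat n k j (j + 1)) :
    Borbit e = { x | IsStrictUpperTri x ∧ x ⟨0, by omega⟩ ⟨1, by omega⟩ = 0 ∧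
      ∀ a b : Fin n, 1 ≤ (a : ℕ) → (b : ℕ) = (a : ℕ) + 1 → x a b ≠ 0 } := by
  change e = subregularNilpotent n k at he
  subst he
  ext x
  constructor
  · rintro ⟨g, hg, hdet, rfl⟩
    exact conj_subregularNilpotent_mem (by omega) hg (hdet ▸ isUnit_one)
  · rintro ⟨hx, h01, hsd⟩
    exact exists_conj_subregularNilpotent (by omega) (isUpperTriAbove_one_iff.2 hx) h01 hsd
end

section
/- Let k be a field, let n ≥ 2, and let i, j satisfy 1 ≤ i < j ≤ n−1 with j ≥ i+2. If x is a strictly upper triangular n×n matrix over k with x_{i,i+1} = 0 and x_{j,j+1} = 0, then x^{n-2} = 0. (Hence the subregular nilpotent orbit does not meet u_{α_i} ∩ u_{α_j} when the simple roots α_i and α_j are not adjacent.) -/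
open Matrix

/-- Let `n ≥ 2` and `1 ≤ i < j ≤ n-1` with `j ≥ i + 2`.  If `x` is strictly upper
triangular with `x_{i,i+1} = 0` and `x_{j,j+1} = 0`, then `x^(n-2) = 0`: the subregular
nilpotent orbit does not meet `u_{α_i} ∩ u_{α_j}` when `α_i` and `α_j` are not adjacent. -/
theorem pow_eq_zero_of_two_nonadjacent_gaps {k : Type*} [Field k] {n i j : ℕ}
    (hn : 2 ≤ n) (hi : 1 ≤ i) (hij : i < j) (hj : j ≤ n - 1) (hadj : i + 2 ≤ j)
    (x : Matrix (Fin n) (Fin n) k) (hx : IsStrictUpperTri x)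
    (hxi : x ⟨i - 1, by omega⟩ ⟨i, by omega⟩ = 0)
    (hxj : x ⟨j - 1, by omega⟩ ⟨j, by omega⟩ = 0) :
    x ^ (n - 2) = 0 := by
  have hn4 : 4 ≤ n := by omega
  set w : Fin n → ℕ := fun b =>
    (b : ℕ) - (if i ≤ (b : ℕ) then 1 else 0) - (if j ≤ (b : ℕ) then 1 else 0) with hw
  have step : ∀ c b : Fin n, x c b ≠ 0 → w c + 1 ≤ w b := by
    intro c b h
    have hcb : (c : ℕ) < (b : ℕ) := by
      by_contra hle
      exact h (hx c b (by omega))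
    have hne1 : ¬((c : ℕ) = i - 1 ∧ (b : ℕ) = i) := by
      rintro ⟨h1, h2⟩
      have hc : c = (⟨i - 1, by omega⟩ : Fin n) := Fin.ext h1
      have hb : b = (⟨i, by omega⟩ : Fin n) := Fin.ext h2
      rw [hc, hb] at h
      exact h hxi
    have hne2 : ¬((c : ℕ) = j - 1 ∧ (b : ℕ) = j) := by
      rintro ⟨h1, h2⟩
      have hc : c = (⟨j - 1, by omega⟩ : Fin n) := Fin.ext h1
      have hb : b = (⟨j, by omega⟩ : Fin n) := Fin.ext h2
      rw [hc, hb] at h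
      exact h hxj
    simp only [hw]
    split_ifs <;> omega
  have key : ∀ m (a b : Fin n), (x ^ m) a b ≠ 0 → w a + m ≤ w b := by
    intro m
    induction m with
    | zero =>
      intro a b h
      rcases eq_or_ne a b with rfl | hab
      · omega
      · rw [pow_zero, Matrix.one_apply_ne hab] at h
        exact absurd rfl h
    | succ m ih =>
      intro a b h
      rw [pow_succ, Matrix.mul_apply] at h
      obtain ⟨c, -, hc⟩ := Finset.exists_ne_zero_of_sum_ne_zero h
      have h1 : (x ^ m) a c ≠ 0 := fun hz => hc (by rw [hz, zero_mul])
      have h2 : x c b ≠ 0 := fun hz => hc (by rw [hz, mul_zero])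
      have := ih a c h1
      have := step c b h2
      omega
  ext a b
  simp only [Matrix.zero_apply]
  by_contra h
  have h1 := key (n - 2) a b h
  have hb : (b : ℕ) < n := b.isLt
  simp only [hw] at h1
  split_ifs at h1 <;> omega
end

section
/- Let k be an algebraically closed field, let n ≥ 3 and let i satisfy 1 ≤ i ≤ n−2. Then the set of strictly upper triangular n×n matrices x over k with x_{i,i+1} = 0, x_{i+1,i+2} = 0 and x^{n-2} ≠ 0 is nonempty and is a single orbit under conjugation by the group B of upper triangular n×n matrices of determinant 1. -/
open Matrix

namespace SubregAux
open Finset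
set_option linter.unusedSectionVars false
set_option maxHeartbeats 1000000

variable {k : Type*} [Field k] {n j : ℕ} {x : Matrix (Fin n) (Fin n) k}

lemma wt_pow_zero (h : Fin n → ℕ) (hx : ∀ a c, x a c ≠ 0 → h a + 1 ≤ h c) :
    ∀ (m : ℕ) (a b : Fin n), h b < h a + m → (x ^ m) a b = 0 := by
  intro m
  induction m with
  | zero =>
    intro a b hab
    rw [pow_zero, Matrix.one_apply_ne]
    rintro rfl; omega
  | succ m ih =>
    intro a b hab
    rw [pow_succ', Matrix.mul_apply]
    apply Finset.sum_eq_zero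
    intro c _
    by_cases hc : x a c = 0
    · rw [hc, zero_mul]
    · rw [ih c b (by have := hx a c hc; omega), mul_zero]

/-- weight function recording that level j → j+1 is broken -/
def wA (j : ℕ) {n : ℕ} (t : Fin n) : ℕ := if (t:ℕ) ≤ j then t else (t:ℕ) - 1

/-- weight function recording that level j+1 → j+2 is broken -/
def wB (j : ℕ) {n : ℕ} (t : Fin n) : ℕ := if (t:ℕ) ≤ j+1 then t else (t:ℕ) - 1

/-- the power of x placing the chain at position b -/
def dd (n j : ℕ) (b : ℕ) : ℕ := if b ≤ j then n-2-b else n-1-b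

/-- The representative: a chain skipping level j+1. -/
def Emat (k : Type*) [Field k] (n j : ℕ) : Matrix (Fin n) (Fin n) k :=
  Matrix.of fun a b =>
    if ((a:ℕ)+1 = (b:ℕ) ∧ (a:ℕ) ≠ j ∧ (a:ℕ) ≠ j+1) ∨ ((a:ℕ) = j ∧ (b:ℕ) = j+2) then 1 else 0

/-- chain position after m steps from n-1 -/
def cpos (n j m : ℕ) : ℕ := if m + j + 3 ≤ n then n-1-m else n-2-m

lemma Emat_apply (a b : Fin n) :
    Emat k n j a b =
    if ((a:ℕ)+1 = (b:ℕ) ∧ (a:ℕ) ≠ j ∧ (a:ℕ) ≠ j+1) ∨ ((a:ℕ) = j ∧ (b:ℕ) = j+2) then 1 else 0 :=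
  rfl

lemma Emat_chain (hn : j + 3 ≤ n) :
    ∀ m, m ≤ n - 2 → ∀ a : Fin n,
      ((Emat k n j) ^ m) a ⟨n-1, by omega⟩ = if (a:ℕ) = cpos n j m then 1 else 0 := by
  intro m
  induction m with
  | zero =>
    intro _ a
    rw [pow_zero, Matrix.one_apply]
    have hc0 : cpos n j 0 = n - 1 := by
      simp only [cpos]; rw [if_pos (by omega)]; omega
    rw [hc0]
    have : (a = ⟨n-1, by omega⟩) ↔ ((a:ℕ) = n - 1) := by
      constructor
      · rintro rfl; rfl
      · intro h; exact Fin.ext h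
    split_ifs with h1 h2 h2
    · rfl
    · exact absurd (this.1 h1) h2
    · exact absurd (this.2 h2) h1
    · rfl
  | succ m ih =>
    intro hm a
    have hm' : m ≤ n - 2 := by omega
    have hcp : cpos n j m < n := by simp only [cpos]; split <;> omega
    rw [pow_succ', Matrix.mul_apply]
    rw [Finset.sum_eq_single_of_mem ⟨cpos n j m, hcp⟩ (Finset.mem_univ _)]
    · rw [ih hm' _, if_pos rfl, mul_one, Emat_apply]
      have hcpm : m + 1 ≤ n - 2 := hm
      have key : (((a:ℕ)+1 = cpos n j m ∧ (a:ℕ) ≠ j ∧ (a:ℕ) ≠ j+1) ∨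
          ((a:ℕ) = j ∧ cpos n j m = j+2)) ↔ (a:ℕ) = cpos n j (m+1) := by
        simp only [cpos]
        have ha := a.isLt
        split_ifs <;> omega
      split_ifs with h1 h2 h2
      · rfl
      · exact absurd (key.1 h1) h2
      · exact absurd (key.2 h2) h1
      · rfl
    · intro c _ hne
      rw [ih hm' c, if_neg (fun h => hne (Fin.ext h)), mul_zero]

lemma Emat_pow_ne_zero (hn : j + 3 ≤ n) : (Emat k n j) ^ (n-2) ≠ 0 := by
  intro h0
  have hc1 : cpos n j (n-2) = 0 := by
    simp only [cpos]; rw [if_neg (by omega)]; omega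
  have := Emat_chain (k := k) hn (n-2) le_rfl ⟨0, by omega⟩
  rw [h0, Matrix.zero_apply, hc1, if_pos rfl] at this
  exact zero_ne_one this

lemma conj_pow {g : Matrix (Fin n) (Fin n) k} (e : Matrix (Fin n) (Fin n) k)
    (hdet : IsUnit g.det) :
    ∀ m : ℕ, (g * e * g⁻¹) ^ m = g * e ^ m * g⁻¹ := by
  intro m
  induction m with
  | zero => rw [pow_zero, pow_zero, mul_one, Matrix.mul_nonsing_inv _ hdet]
  | succ m ih =>
    rw [pow_succ, pow_succ, ih]
    rw [show g * e ^ m * g⁻¹ * (g * e * g⁻¹) = g * e ^ m * (g⁻¹ * g) * e * g⁻¹ by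
      simp only [Matrix.mul_assoc]]
    rw [Matrix.nonsing_inv_mul _ hdet, mul_one]
    simp only [Matrix.mul_assoc]

lemma sandwich_zero {g h u : Matrix (Fin n) (Fin n) k}
    (hg : IsUpperTri g) (hh : IsUpperTri h) (a b : Fin n)
    (hu : ∀ c d : Fin n, (a:ℕ) ≤ (c:ℕ) → (d:ℕ) ≤ (b:ℕ) → u c d = 0) :
    (g * u * h) a b = 0 := by
  rw [Matrix.mul_apply]
  apply Finset.sum_eq_zero
  intro d _
  by_cases hd : (d:ℕ) ≤ (b:ℕ)
  · rw [Matrix.mul_apply]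
    rw [Finset.sum_eq_zero, zero_mul]
    intro c _
    by_cases hc : (a:ℕ) ≤ (c:ℕ)
    · rw [hu c d hc hd, mul_zero]
    · rw [hg a c (by omega), zero_mul]
  · rw [hh d b (by omega), mul_zero]

lemma inv_upper {g : Matrix (Fin n) (Fin n) k} (hg : IsUpperTri g) (hdet : IsUnit g.det) :
    IsUpperTri g⁻¹ := by
  letI := g.invertibleOfIsUnitDet hdet
  have hbt : BlockTriangular g (Fin.val) := fun a b hab => hg a b hab
  have h2 := Matrix.blockTriangular_inv_of_blockTriangular hbt
  exact fun a b hab => h2 hab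

section main
variable (hn : j + 3 ≤ n) (hsu : IsStrictUpperTri x)
  (hz1 : x ⟨j, by omega⟩ ⟨j+1, by omega⟩ = 0)
  (hz2 : x ⟨j+1, by omega⟩ ⟨j+2, by omega⟩ = 0)

include hn hsu hz1 in
lemma vanishA : ∀ (m : ℕ) (a b : Fin n), wA j b < wA j a + m → (x ^ m) a b = 0 := by
  apply wt_pow_zero
  intro a c hne
  have hac : (a : ℕ) < (c : ℕ) := by
    by_contra hle
    exact hne (hsu a c (by omega))
  have hnot : ¬((a : ℕ) = j ∧ (c : ℕ) = j + 1) := by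
    rintro ⟨h1, h2⟩
    apply hne
    obtain ⟨av, hav⟩ := a
    obtain ⟨cv, hcv⟩ := c
    simp only at h1 h2
    subst h1 h2
    exact hz1
  simp only [wA]
  split_ifs <;> omega

include hn hsu hz2 in
lemma vanishB : ∀ (m : ℕ) (a b : Fin n), wB j b < wB j a + m → (x ^ m) a b = 0 := by
  apply wt_pow_zero
  intro a c hne
  have hac : (a : ℕ) < (c : ℕ) := by
    by_contra hle
    exact hne (hsu a c (by omega))
  have hnot : ¬((a : ℕ) = j + 1 ∧ (c : ℕ) = j + 2) := by
    rintro ⟨h1, h2⟩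
    apply hne
    obtain ⟨av, hav⟩ := a
    obtain ⟨cv, hcv⟩ := c
    simp only at h1 h2
    subst h1 h2
    exact hz2
  simp only [wB]
  split_ifs <;> omega

include hn hsu hz1 hz2 in
/-- splitting a power entry as a single product -/
lemma split (m1 m2 : ℕ) (p q a0 : Fin n)
    (hcond : ∀ a : Fin n, (a:ℕ) ≠ (a0:ℕ) →
      wA j q < wA j a + m2 ∨ wB j q < wB j a + m2 ∨
      wA j a < wA j p + m1 ∨ wB j a < wB j p + m1) :
    (x ^ (m1 + m2)) p q = (x ^ m1) p a0 * (x ^ m2) a0 q := by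
  rw [pow_add, Matrix.mul_apply]
  apply Finset.sum_eq_single_of_mem a0 (Finset.mem_univ _)
  intro a _ hne
  rcases hcond a (fun h => hne (Fin.ext h)) with h | h | h | h
  · rw [vanishA hn hsu hz1 m2 a q h, mul_zero]
  · rw [vanishB hn hsu hz2 m2 a q h, mul_zero]
  · rw [vanishA hn hsu hz1 m1 p a h, zero_mul]
  · rw [vanishB hn hsu hz2 m1 p a h, zero_mul]

include hn hsu hz1 hz2 in
lemma forward (hpow : x ^ (n-2) ≠ 0) :
    ∃ g : Matrix (Fin n) (Fin n) k, IsUpperTri g ∧ g.det = 1 ∧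
      x = g * Emat k n j * g⁻¹ := by
  have hn1 : n - 1 < n := by omega
  have h0n : 0 < n := by omega
  have hj1n : j + 1 < n := by omega
  -- the corner entry is nonzero
  have hc : (x ^ (n-2)) ⟨0, h0n⟩ ⟨n-1, hn1⟩ ≠ 0 := by
    intro h0
    apply hpow
    ext a b
    rw [Matrix.zero_apply]
    have ha := a.isLt
    have hb := b.isLt
    by_cases ha0 : (a:ℕ) = 0
    · by_cases hb1 : (b:ℕ) = n - 1
      · have h1 : a = ⟨0, h0n⟩ := Fin.ext ha0
        have h2 : b = ⟨n-1, hn1⟩ := Fin.ext hb1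
        rw [h1, h2]; exact h0
      · apply vanishA hn hsu hz1
        simp only [wA]
        split_ifs <;> omega
    · apply vanishB hn hsu hz2
      simp only [wB]
      split_ifs <;> omega
  -- factorization of the corner entry through any chain position b
  have hfact : ∀ b : Fin n, (b:ℕ) ≠ j+1 →
      (x ^ (n-2)) ⟨0, h0n⟩ ⟨n-1, hn1⟩ =
        (x ^ (n-2-dd n j b)) ⟨0, h0n⟩ b * (x ^ dd n j b) b ⟨n-1, hn1⟩ := by
    intro b hbne
    have hb := b.isLt
    have hddle : dd n j b ≤ n - 2 := by simp only [dd]; split <;> omega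
    have hsp := split hn hsu hz1 hz2 (n-2-dd n j (b:ℕ)) (dd n j (b:ℕ))
      ⟨0, h0n⟩ ⟨n-1, hn1⟩ b ?_
    · rw [show n-2-dd n j (b:ℕ) + dd n j (b:ℕ) = n-2 by omega] at hsp
      exact hsp
    · intro a hane
      have ha := a.isLt
      simp only [wA, wB, dd, Fin.val_mk] at *
      split_ifs at * <;> omega
  have hD : ∀ b : Fin n, (b:ℕ) ≠ j+1 → (x ^ dd n j b) b ⟨n-1, hn1⟩ ≠ 0 := by
    intro b hbne h0
    exact hc (by rw [hfact b hbne, h0, mul_zero])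
  have hL : ∀ b : Fin n, (b:ℕ) ≠ j+1 → (x ^ (n-2-dd n j b)) ⟨0, h0n⟩ b ≠ 0 := by
    intro b hbne h0
    exact hc (by rw [hfact b hbne, h0, zero_mul])
  -- the low superdiagonal entries are nonzero
  have hsd : ∀ t : ℕ, (ht : t + 1 ≤ j) → x ⟨t, by omega⟩ ⟨t+1, by omega⟩ ≠ 0 := by
    intro t ht
    have hsp : (x ^ (t + 1)) ⟨0, h0n⟩ ⟨t+1, by omega⟩ =
        (x ^ t) ⟨0, h0n⟩ ⟨t, by omega⟩ * (x ^ 1) ⟨t, by omega⟩ ⟨t+1, by omega⟩ := by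
      apply split hn hsu hz1 hz2
      intro a hane
      have ha := a.isLt
      simp only [wA, wB, Fin.val_mk] at *
      split_ifs at * <;> omega
    have hne0 : (x ^ (t+1)) ⟨0, h0n⟩ ⟨t+1, by omega⟩ ≠ 0 := by
      have hLt := hL ⟨t+1, by omega⟩ (by first | omega | (simp only [Fin.val_mk]; omega))
      have hddt : n - 2 - dd n j ((⟨t+1, by omega⟩ : Fin n):ℕ) = t + 1 := by
        simp only [dd, Fin.val_mk]
        rw [if_pos (by omega)]
        omega
      rw [hddt] at hLt
      exact hLt
    intro h0
    rw [hsp, pow_one, h0, mul_zero] at hne0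
    exact hne0 rfl
  -- the kernel-column correction vector
  set M : Matrix (Fin j) (Fin j) k :=
    Matrix.of (fun s t => x ⟨(s:ℕ), by omega⟩ ⟨(t:ℕ)+1, by omega⟩) with hM
  have hMapp : ∀ s t, M s t = x ⟨(s:ℕ), by omega⟩ ⟨(t:ℕ)+1, by omega⟩ := fun s t => rfl
  have hMdet : M.det ≠ 0 := by
    have htri : M.BlockTriangular id := by
      intro s t hst
      have hst' : (t:ℕ) < (s:ℕ) := hst
      rw [hMapp]
      exact hsu _ _ (by first | omega | (simp only [Fin.val_mk]; omega))
    rw [Matrix.det_of_upperTriangular htri]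
    rw [Finset.prod_ne_zero_iff]
    intro t _
    rw [hMapp]
    exact hsd t (by omega)
  have hMunit : IsUnit M.det := hMdet.isUnit
  set bv : Fin j → k := fun s => - x ⟨(s:ℕ), by omega⟩ ⟨j+1, hj1n⟩ with hbv
  set w : Fin j → k := M⁻¹ *ᵥ bv with hw
  have hMw : M *ᵥ w = bv := by
    rw [hw, Matrix.mulVec_mulVec, Matrix.mul_nonsing_inv _ hMunit, Matrix.one_mulVec]
  set u : Fin n → k := fun a =>
    if ha : 1 ≤ (a:ℕ) ∧ (a:ℕ) ≤ j then w ⟨(a:ℕ)-1, by omega⟩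
    else if (a:ℕ) = j+1 then 1 else 0 with hu
  have hu_j1 : u ⟨j+1, hj1n⟩ = 1 := by
    simp only [hu]
    rw [dif_neg (by first | omega | (simp only [Fin.val_mk]; omega))]
    simp
  have hu_hi : ∀ a : Fin n, j + 1 < (a:ℕ) → u a = 0 := by
    intro a hja
    simp only [hu]
    rw [dif_neg (by omega), if_neg (by omega)]
  have hu_0 : u ⟨0, h0n⟩ = 0 := by
    simp only [hu]
    rw [dif_neg (by first | omega | (simp only [Fin.val_mk]; omega)),
      if_neg (by first | omega | (simp only [Fin.val_mk]; omega))]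
  -- u is in the kernel of x
  have hxu : ∀ a : Fin n, (∑ c, x a c * u c) = 0 := by
    intro a
    have ha := a.isLt
    by_cases haj : j ≤ (a:ℕ)
    · apply Finset.sum_eq_zero
      intro c _
      by_cases hca : (c:ℕ) ≤ (a:ℕ)
      · rw [hsu a c hca, zero_mul]
      · by_cases hcj : (c:ℕ) = j + 1
        · have haj' : (a:ℕ) = j := by omega
          have hac : x a c = 0 := by
            obtain ⟨av, hav⟩ := a
            obtain ⟨cv, hcv⟩ := c
            have h1 : av = j := haj'
            have h2 : cv = j + 1 := hcj
            subst h1 h2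
            exact hz1
          rw [hac, zero_mul]
        · rw [hu_hi c (by omega), mul_zero]
    · -- a < j
      push_neg at haj
      set f : ℕ → k := fun c =>
        if hc : c < n then x a ⟨c, hc⟩ * u ⟨c, hc⟩ else 0 with hf
      have hfc : ∀ c : Fin n, f (c:ℕ) = x a c * u c := by
        intro c
        simp only [hf]
        rw [dif_pos c.isLt]
      have hstep1 : (∑ c, x a c * u c) = ∑ c ∈ Finset.range n, f c := by
        rw [← Fin.sum_univ_eq_sum_range]
        exact Finset.sum_congr rfl (fun c _ => (hfc c).symm)
      have hstep2 : ∑ c ∈ Finset.range n, f c = ∑ c ∈ Finset.range (j+2), f c := by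
        symm
        apply Finset.sum_subset (by intro t ht; rw [Finset.mem_range] at *; omega)
        intro c hcn hcj
        rw [Finset.mem_range] at hcn hcj
        simp only [hf]
        rw [dif_pos hcn, hu_hi _ (by first | omega | (simp only [Fin.val_mk]; omega)), mul_zero]
      have hstep3 : ∑ c ∈ Finset.range (j+2), f c =
          (∑ c ∈ Finset.range (j+1), f c) + f (j+1) := Finset.sum_range_succ f (j+1)
      have hfj1 : f (j+1) = x a ⟨j+1, hj1n⟩ := by
        simp only [hf]
        rw [dif_pos hj1n, hu_j1, mul_one]
      have hstep4 : ∑ c ∈ Finset.range (j+1), f c =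
          (∑ t ∈ Finset.range j, f (t+1)) + f 0 := Finset.sum_range_succ' f j
      have hf0 : f 0 = 0 := by
        simp only [hf]
        rw [dif_pos h0n, hu_0, mul_zero]
      have hmv : ∀ s, (M *ᵥ w) s = ∑ t, M s t * w t := fun s => rfl
      have hstep5 : ∑ t ∈ Finset.range j, f (t+1) = - x a ⟨j+1, hj1n⟩ := by
        have hav : (a:ℕ) < j := haj
        have h5 : ∑ t ∈ Finset.range j, f (t+1) = (M *ᵥ w) ⟨(a:ℕ), hav⟩ := by
          rw [hmv]
          rw [← Fin.sum_univ_eq_sum_range (fun t => f (t+1)) j]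
          apply Finset.sum_congr rfl
          intro t _
          have htn : (t:ℕ) + 1 < n := by omega
          simp only [hf]
          rw [dif_pos htn]
          have h1 : u ⟨(t:ℕ)+1, htn⟩ = w t := by
            simp only [hu]
            rw [dif_pos (by first | omega | (simp only [Fin.val_mk]; omega))]
            first
            | rfl
            | (congr 1; exact Fin.ext (by simp))
          rw [h1, hMapp]
          try rfl
        rw [h5, hMw, hbv]
      rw [hstep1, hstep2, hstep3, hstep4, hf0, hfj1, hstep5]
      ring
  -- the conjugating matrix
  set P : k := ∏ b ∈ Finset.univ.erase (⟨j+1, hj1n⟩ : Fin n),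
    (x ^ dd n j (b:ℕ)) b ⟨n-1, hn1⟩ with hP
  have hPne : P ≠ 0 := by
    rw [hP, Finset.prod_ne_zero_iff]
    intro b hb
    exact hD b (fun h => (Finset.mem_erase.1 hb).1 (Fin.ext h))
  set lam : k := P⁻¹ with hlam
  have hlamne : lam ≠ 0 := inv_ne_zero hPne
  set g : Matrix (Fin n) (Fin n) k := Matrix.of (fun a b =>
    if (b:ℕ) = j+1 then lam * u a else (x ^ dd n j (b:ℕ)) a ⟨n-1, hn1⟩) with hg
  have hgapp : ∀ a b : Fin n, g a b =
      if (b:ℕ) = j+1 then lam * u a else (x ^ dd n j (b:ℕ)) a ⟨n-1, hn1⟩ := fun a b => rfl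
  -- g is upper triangular
  have hgu : IsUpperTri g := by
    intro a b hba
    have ha := a.isLt
    have hb := b.isLt
    rw [hgapp]
    by_cases hbj : (b:ℕ) = j+1
    · rw [if_pos hbj, hu_hi a (by omega), mul_zero]
    · rw [if_neg hbj]
      by_cases hbj2 : (b:ℕ) ≤ j
      · apply vanishB hn hsu hz2
        simp only [wB, dd, Fin.val_mk]
        split_ifs <;> omega
      · apply vanishA hn hsu hz1
        simp only [wA, dd, Fin.val_mk]
        split_ifs <;> omega
  -- determinant 1
  have hdet1 : g.det = 1 := by
    have htri : g.BlockTriangular id := fun a b hab => hgu a b hab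
    rw [Matrix.det_of_upperTriangular htri]
    rw [← Finset.mul_prod_erase Finset.univ (fun b => g b b)
      (Finset.mem_univ (⟨j+1, hj1n⟩ : Fin n))]
    have h1 : g ⟨j+1, hj1n⟩ ⟨j+1, hj1n⟩ = lam := by
      rw [hgapp, if_pos rfl, hu_j1, mul_one]
    have h2 : ∏ b ∈ Finset.univ.erase (⟨j+1, hj1n⟩ : Fin n), g b b = P := by
      apply Finset.prod_congr rfl
      intro b hb
      rw [hgapp, if_neg (fun h => (Finset.mem_erase.1 hb).1 (Fin.ext h))]
    rw [h1, h2, hlam]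
    exact inv_mul_cancel₀ hPne
  -- the intertwining relation
  have hkey : g * Emat k n j = x * g := by
    ext a b
    have ha := a.isLt
    have hb := b.isLt
    rw [Matrix.mul_apply, Matrix.mul_apply]
    by_cases hb0 : (b:ℕ) = 0
    · have hLL : ∑ c, g a c * Emat k n j c b = 0 :=
        Finset.sum_eq_zero fun c _ => by
          rw [Emat_apply, if_neg (by have := c.isLt; omega), mul_zero]
      have hddb : dd n j (b:ℕ) = n - 2 := by
        simp only [dd, hb0]
        rw [if_pos (Nat.zero_le _)]
        omega
      have hRL : ∑ c, x a c * g c b = (x ^ (1 + (n-2))) a ⟨n-1, hn1⟩ := by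
        rw [pow_add, pow_one, Matrix.mul_apply]
        refine Finset.sum_congr rfl fun c _ => ?_
        rw [hgapp, if_neg (by omega), hddb]
      rw [hLL, hRL]
      exact (vanishA hn hsu hz1 _ _ _
        (by simp only [wA, Fin.val_mk]; split_ifs <;> omega)).symm
    · by_cases hb1 : (b:ℕ) = j + 1
      · have hL0 : ∑ c, g a c * Emat k n j c b = 0 := by
          apply Finset.sum_eq_zero
          intro c _
          rw [Emat_apply, if_neg (by have := c.isLt; omega), mul_zero]
        have hR0 : ∑ c, x a c * g c b = 0 := by
          have h5 : ∑ c, x a c * g c b = lam * ∑ c, x a c * u c := by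
            rw [Finset.mul_sum]
            apply Finset.sum_congr rfl
            intro c _
            rw [hgapp, if_pos hb1]
            ring
          rw [h5, hxu a, mul_zero]
        rw [hL0, hR0]
      · have hRpow : ∑ c, x a c * g c b = (x ^ (1 + dd n j (b:ℕ))) a ⟨n-1, hn1⟩ := by
          rw [pow_add, pow_one, Matrix.mul_apply]
          apply Finset.sum_congr rfl
          intro c _
          rw [hgapp, if_neg hb1]
        by_cases hb2 : (b:ℕ) = j + 2
        · have hjn' : j < n := by omega
          rw [Finset.sum_eq_single_of_mem (⟨j, hjn'⟩ : Fin n) (Finset.mem_univ _)]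
          · rw [Emat_apply, if_pos (Or.inr ⟨rfl, hb2⟩), mul_one]
            rw [hgapp, if_neg (by first | omega | (simp only [Fin.val_mk]; omega))]
            rw [hRpow]
            rw [show dd n j ((⟨j, hjn'⟩ : Fin n):ℕ) = 1 + dd n j (b:ℕ) by
              simp only [dd, Fin.val_mk, hb2]; split_ifs <;> omega]
          · intro c _ hne
            have hcv : (c:ℕ) ≠ j := fun h => hne (Fin.ext h)
            rw [Emat_apply, if_neg (by have := c.isLt; omega), mul_zero]
        · have hbn' : (b:ℕ) - 1 < n := by omega
          rw [Finset.sum_eq_single_of_mem (⟨(b:ℕ)-1, hbn'⟩ : Fin n) (Finset.mem_univ _)]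
          · rw [Emat_apply, if_pos (Or.inl (by first | omega | (simp only [Fin.val_mk]; omega))), mul_one]
            rw [hgapp, if_neg (by first | omega | (simp only [Fin.val_mk]; omega))]
            rw [hRpow]
            rw [show dd n j ((⟨(b:ℕ)-1, hbn'⟩ : Fin n):ℕ) = 1 + dd n j (b:ℕ) by
              simp only [dd, Fin.val_mk]; split_ifs <;> omega]
          · intro c _ hne
            have hcv : (c:ℕ) ≠ (b:ℕ) - 1 := fun h => hne (Fin.ext h)
            rw [Emat_apply, if_neg (by have := c.isLt; omega), mul_zero]
  refine ⟨g, hgu, hdet1, ?_⟩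
  have hdu : IsUnit g.det := by rw [hdet1]; exact isUnit_one
  rw [hkey, Matrix.mul_assoc, Matrix.mul_nonsing_inv _ hdu, Matrix.mul_one]

end main
end SubregAux

/-- For `n ≥ 3` and `1 ≤ i ≤ n-2`, the set of strictly upper triangular matrices `x` with
`x_{i,i+1} = 0`, `x_{i+1,i+2} = 0` and `x^(n-2) ≠ 0` (the intersection
`O ∩ u_{α_i} ∩ u_{α_{i+1}}` of the subregular orbit with the nilradicals of two adjacent
minimal parabolics) is nonempty and is a single `B`-orbit. -/
theorem subregular_meet_two_adjacent_nilradicals_single_Borbit {k : Type*} [Field k]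
    [IsAlgClosed k] {n i : ℕ} (hn : 3 ≤ n) (hi1 : 1 ≤ i) (hi2 : i ≤ n - 2) :
    ∃ e : Matrix (Fin n) (Fin n) k,
      { x : Matrix (Fin n) (Fin n) k | IsStrictUpperTri x ∧
        x ⟨i - 1, by omega⟩ ⟨i, by omega⟩ = 0 ∧
        x ⟨i, by omega⟩ ⟨i + 1, by omega⟩ = 0 ∧ x ^ (n - 2) ≠ 0 } = Borbit e := by
  obtain ⟨j, rfl⟩ : ∃ j, i = j + 1 := ⟨i - 1, by omega⟩
  have hnj : j + 3 ≤ n := by omega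
  refine ⟨SubregAux.Emat k n j, ?_⟩
  ext x
  simp only [Set.mem_setOf_eq, Borbit]
  constructor
  · rintro ⟨hsu, hz1, hz2, hpow⟩
    exact SubregAux.forward hnj hsu hz1 hz2 hpow
  · rintro ⟨g, hg, hgdet, rfl⟩
    have hdu : IsUnit g.det := by rw [hgdet]; exact isUnit_one
    have hginv : IsUpperTri g⁻¹ := SubregAux.inv_upper hg hdu
    refine ⟨?_, ?_, ?_, ?_⟩
    · intro a b hba
      exact SubregAux.sandwich_zero hg hginv a b (fun c d hc hd => by
        rw [SubregAux.Emat_apply, if_neg (by omega)])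
    · exact SubregAux.sandwich_zero hg hginv _ _ (fun c d hc hd => by
        rw [SubregAux.Emat_apply, if_neg
          (by first | omega | (simp only [Fin.val_mk] at hc hd; omega))])
    · exact SubregAux.sandwich_zero hg hginv _ _ (fun c d hc hd => by
        rw [SubregAux.Emat_apply, if_neg
          (by first | omega | (simp only [Fin.val_mk] at hc hd; omega))])
    · rw [SubregAux.conj_pow _ hdu]
      intro h0
      apply SubregAux.Emat_pow_ne_zero (k := k) hnj
      have h1 := congrArg (fun M => g⁻¹ * M * g) h0
      rw [Matrix.mul_zero, Matrix.zero_mul] at h1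
      simp only [← Matrix.mul_assoc] at h1
      rw [Matrix.nonsing_inv_mul _ hdu, Matrix.one_mul, Matrix.mul_assoc,
        Matrix.nonsing_inv_mul _ hdu, Matrix.mul_one] at h1
      exact h1
end

section
/- Let k be an algebraically closed field with char k ≠ 2, let n ≥ 4 and let i satisfy 2 ≤ i ≤ n−2. With rows and columns indexed by I = {1,…,n,0,−n,…,−1}, let J be the symmetric (2n+1)×(2n+1) matrix with J_{0,0} = 1, J_{a,−a} = J_{−a,a} = 1 for 1 ≤ a ≤ n, and all other entries 0, and let e = Σ_{j=1, j≠i}^{n-1} (E_{j,j+1} − E_{−(j+1),−j}) + (E_{n,0} − E_{0,−n}) + (E_{i,i+2} − E_{−(i+2),−i}). Then: (i) eᵀJ + Je = 0, i.e. e ∈ so_{2n+1}(k); (ii) e^{2n-1} = 0 and e^{2n-2} ≠ 0; (iii) rank(e) = 2n−2. Consequently e is nilpotent of Jordan type (2n−1,1,1), i.e. e lies in the subregular nilpotent orbit of so_{2n+1}(k). -/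
open Matrix

/-- The elementary `(2n+1) × (2n+1)` matrix `E a b`, with rows and columns indexed by
`I = {1, …, n, 0, -n, …, -1}` (in this order, corresponding to the ordered basis
`v_1, …, v_n, v_0, v_{-n}, …, v_{-1}`): its `(a, b)` entry is `1` and all other entries
are `0`. -/
def Eodd (n : ℕ) (k : Type*) [Field k] (a b : ℤ) :
    Matrix (Fin (2 * n + 1)) (Fin (2 * n + 1)) k :=
  Matrix.of fun p q =>
    if ((p : ℕ) : ℤ) = (if 0 < a then a - 1 else if a = 0 then (n : ℤ) else 2 * n + 1 + a)
        ∧ ((q : ℕ) : ℤ) = (if 0 < b then b - 1 else if b = 0 then (n : ℤ) else 2 * n + 1 + b)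
      then 1 else 0

/-- The Gram matrix `J` of the symmetric bilinear form on `k^{2n+1}` with
`(v_0, v_0) = 1`, `(v_a, v_{-a}) = (v_{-a}, v_a) = 1` for `1 ≤ a ≤ n`, and all other
pairings of basis vectors `0`. -/
def Jodd (n : ℕ) (k : Type*) [Field k] :
    Matrix (Fin (2 * n + 1)) (Fin (2 * n + 1)) k :=
  Eodd n k 0 0 + ∑ a ∈ Finset.Icc 1 n, (Eodd n k (a : ℤ) (-(a : ℤ)) + Eodd n k (-(a : ℤ)) (a : ℤ))

/-!
In the positions `0, …, 2n` of `Fin (2n+1)` the Gram matrix `J` is the exchange matrix `R` of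
`Fin.rev`, and `E_{-b,-a} = R E_{a,b}ᵀ R`. Hence `e = A - R Aᵀ R`, where `A` collects the terms
`E_{a,b}`, and such a matrix is skew-adjoint for `R` because `Rᵀ = R = R⁻¹`.

Reading off the entries, `e` sends `v_q` to `± v_{q-1}`, except that `v_0` and `v_i` go to `0`,
`v_{i+1}` goes to `v_{i-1} + v_i` and `v_{2n+1-i}` to `-v_{2n-1-i}`. The nonzero entries
therefore strictly increase the height `height q ∈ [0, 2n-2]` (`q` minus the number of the
positions `i`, `2n+1-i` that are `≤ q`), so `e^{2n-1} = 0`; and `v_{2n}` starts a chain of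
length `2n-2` ending at `± v_0`, so `e^{2n-2} ≠ 0`. For a nilpotent map, `e x, …, e^m x` are
linearly independent as soon as `e^m x ≠ 0`, which gives `rank e ≥ 2n-2`; the kernel contains
`v_0, v_i, v_{2n+1-i} - v_{2n-i}`, which gives `rank e ≤ 2n-2`.
-/

theorem Matrix.pow_apply_eq_zero_of_lt_add {ι R : Type*} [Fintype ι] [DecidableEq ι] [Semiring R]
    {M : Matrix ι ι R} (w : ι → ℕ) (hM : ∀ p q, M p q ≠ 0 → w p < w q) (m : ℕ) :
    ∀ p q, w q < w p + m → (M ^ m) p q = 0 := by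
  induction m with
  | zero =>
    intro p q h
    exact one_apply_ne fun hpq => by subst hpq; omega
  | succ m ih =>
    intro p q h
    rw [pow_succ', mul_apply]
    refine Finset.sum_eq_zero fun r _ => ?_
    by_cases hpr : M p r = 0
    · rw [hpr, zero_mul]
    · rw [ih r q (by have := hM p r hpr; omega), mul_zero]

theorem Matrix.pow_eq_zero_of_weight_lt {ι R : Type*} [Fintype ι] [DecidableEq ι] [Semiring R]
    {M : Matrix ι ι R} (w : ι → ℕ) (hM : ∀ p q, M p q ≠ 0 → w p < w q) {m : ℕ}
    (hw : ∀ q, w q < m) : M ^ m = 0 := by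
  ext p q
  exact M.pow_apply_eq_zero_of_lt_add w hM m p q (by have := hw q; omega)

theorem Matrix.pow_mulVec_eq_or_eq_neg {ι R : Type*} [Fintype ι] [DecidableEq ι] [CommRing R]
    {M : Matrix ι ι R} {u : ℕ → ι → R} {N : ℕ}
    (h : ∀ m < N, M *ᵥ u (m + 1) = u m ∨ M *ᵥ u (m + 1) = -u m) :
    ∀ j ≤ N, M ^ j *ᵥ u N = u (N - j) ∨ M ^ j *ᵥ u N = -u (N - j) := by
  intro j
  induction j with
  | zero => simp
  | succ j ih =>
    intro hj
    have hN : N - j = N - (j + 1) + 1 := by omega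
    rw [pow_succ', ← mulVec_mulVec]
    rcases ih (by omega) with hu | hu <;> rw [hu, hN] <;>
      rcases h (N - (j + 1)) (by omega) with hs | hs <;> simp [mulVec_neg, hs]

theorem Module.End.linearIndependent_pow_apply {K V : Type*} [Field K] [AddCommGroup V]
    [Module K V] {f : Module.End K V} {m : ℕ} :
    ∀ {x : V}, (f ^ m) x ≠ 0 → (f ^ (m + 1)) x = 0 →
      LinearIndependent K (fun j : Fin (m + 1) => (f ^ (j : ℕ)) x) := by
  induction m with
  | zero =>
    intro x hx _
    exact linearIndependent_unique_iff (ι := Fin 1) |>.mpr (by simpa using hx)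
  | succ m ih =>
    intro x hx hx1
    have hcons : (fun j : Fin (m + 2) => (f ^ (j : ℕ)) x) =
        Fin.cons x (fun j : Fin (m + 1) => (f ^ (j : ℕ)) (f x)) := by
      ext j
      refine Fin.cases (by simp) (fun j => ?_) j
      simp [pow_succ, Module.End.mul_apply]
    have hspan : Submodule.span K (Set.range fun j : Fin (m + 1) => (f ^ (j : ℕ)) (f x)) ≤
        LinearMap.ker (f ^ (m + 1)) := by
      rw [Submodule.span_le]
      rintro _ ⟨j, rfl⟩
      rw [SetLike.mem_coe, LinearMap.mem_ker, ← Module.End.mul_apply, ← pow_add,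
        ← Module.End.mul_apply, ← pow_succ]
      exact Module.End.pow_map_zero_of_le (by omega) hx1
    rw [hcons, linearIndependent_finCons]
    exact ⟨ih (by rwa [← Module.End.mul_apply, ← pow_succ])
      (by rwa [← Module.End.mul_apply, ← pow_succ]), fun hmem => hx (hspan hmem)⟩

theorem Module.End.le_finrank_range_of_pow_ne_zero {K V : Type*} [Field K] [AddCommGroup V]
    [Module K V] [FiniteDimensional K V] {f : Module.End K V} {m : ℕ} (hm : f ^ m ≠ 0)
    (hm1 : f ^ (m + 1) = 0) : m ≤ Module.finrank K (LinearMap.range f) := by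
  obtain ⟨x, hx⟩ : ∃ x, (f ^ m) x ≠ 0 := by
    by_contra! h
    exact hm (LinearMap.ext h)
  have hli := (linearIndependent_pow_apply hx (by rw [hm1]; rfl)).comp Fin.succ
    (Fin.succ_injective _)
  have hrange (j : Fin m) : (f ^ ((j : ℕ) + 1)) x ∈ LinearMap.range f :=
    ⟨(f ^ (j : ℕ)) x, by rw [pow_succ', Module.End.mul_apply]⟩
  have hli' : LinearIndependent K (fun j : Fin m => (⟨_, hrange j⟩ : LinearMap.range f)) :=
    .of_comp (LinearMap.range f).subtype hli
  simpa using hli'.fintype_card_le_finrank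

theorem Matrix.rank_add_card_le_of_mulVec_eq_zero {ι K : Type*} [Fintype ι] [DecidableEq ι]
    [Field K] {r : ℕ} {M : Matrix ι ι K} {v : Fin r → ι → K} (hv : LinearIndependent K v)
    (hMv : ∀ j, M *ᵥ v j = 0) : M.rank + r ≤ Fintype.card ι := by
  have hker : r ≤ Module.finrank K (LinearMap.ker M.mulVecLin) := by
    have hv' : LinearIndependent K (fun j => (⟨v j, hMv j⟩ : LinearMap.ker M.mulVecLin)) :=
      .of_comp (LinearMap.ker M.mulVecLin).subtype hv
    simpa using hv'.fintype_card_le_finrank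
  have := LinearMap.finrank_range_add_finrank_ker M.mulVecLin
  rw [Module.finrank_fintype_fun_eq_card] at this
  rw [Matrix.rank]
  omega

theorem Matrix.le_rank_of_pow_ne_zero {ι K : Type*} [Fintype ι] [DecidableEq ι] [Field K]
    {M : Matrix ι ι K} {m : ℕ} (hm : M ^ m ≠ 0) (hm1 : M ^ (m + 1) = 0) : m ≤ M.rank := by
  rw [Matrix.rank, ← Matrix.toLin'_apply']
  refine Module.End.le_finrank_range_of_pow_ne_zero ?_ ?_ <;>
    simp only [← Matrix.toLin'_pow, ne_eq, LinearEquiv.map_eq_zero_iff]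
  exacts [hm, hm1]

theorem Matrix.isSkewAdjoint_sub_mul_transpose_mul {ι R : Type*} [Fintype ι] [DecidableEq ι]
    [CommRing R] {J : Matrix ι ι R} (hJ : Jᵀ = J) (hJJ : J * J = 1) (A : Matrix ι ι R) :
    J.IsSkewAdjoint (A - J * Aᵀ * J) := by
  have hJJ' (B : Matrix ι ι R) : J * (J * B) = B := by
    rw [← Matrix.mul_assoc, hJJ, Matrix.one_mul]
  simp only [Matrix.IsSkewAdjoint, Matrix.IsAdjointPair, transpose_sub, transpose_mul,
    transpose_transpose, hJ, Matrix.sub_mul, Matrix.mul_neg, Matrix.mul_sub, Matrix.mul_assoc,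
    hJJ, hJJ', Matrix.mul_one]
  abel


section Exchange

variable {N : ℕ} {R : Type*} [Semiring R]

theorem permMatrix_revPerm_transpose :
    ((Fin.revPerm : Equiv.Perm (Fin N)).permMatrix R)ᵀ = Fin.revPerm.permMatrix R := by
  rw [transpose_permMatrix]; rfl

theorem permMatrix_revPerm_mul_self :
    (Fin.revPerm : Equiv.Perm (Fin N)).permMatrix R * Fin.revPerm.permMatrix R = 1 := by
  rw [← permMatrix_mul, show Fin.revPerm * Fin.revPerm = (1 : Equiv.Perm (Fin N)) from
    Equiv.ext Fin.rev_rev, permMatrix_one]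

theorem permMatrix_revPerm_apply (p q : Fin N) :
    (Fin.revPerm.permMatrix R : Matrix _ _ R) p q = if (p : ℕ) + q + 1 = N then 1 else 0 := by
  simp only [PEquiv.toMatrix_apply, Equiv.toPEquiv_apply, Option.mem_some_iff, Fin.ext_iff,
    Fin.revPerm_apply, Fin.val_rev]
  congr 1
  apply propext
  omega

theorem permMatrix_revPerm_mul_mul_apply (A : Matrix (Fin N) (Fin N) R) (p q : Fin N) :
    (Fin.revPerm.permMatrix R * A * Fin.revPerm.permMatrix R : Matrix _ _ R) p q =
      A p.rev q.rev := by
  simp [PEquiv.toMatrix_toPEquiv_mul, PEquiv.mul_toMatrix_toPEquiv]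

end Exchange

section Subregular

variable {n i : ℕ} {k : Type*} [Field k]

def basisPos (n : ℕ) (a : ℤ) : ℤ :=
  if 0 < a then a - 1 else if a = 0 then n else 2 * n + 1 + a

theorem Eodd_apply (a b : ℤ) (p q : Fin (2 * n + 1)) :
    Eodd n k a b p q = if (p : ℤ) = basisPos n a ∧ (q : ℤ) = basisPos n b then 1 else 0 :=
  rfl

theorem basisPos_of_pos {a : ℤ} (ha : 0 < a) : basisPos n a = a - 1 := if_pos ha

theorem basisPos_zero : basisPos n 0 = n := rfl

theorem basisPos_neg (a : ℤ) : basisPos n (-a) = 2 * n - basisPos n a := by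
  unfold basisPos; split_ifs <;> omega

theorem Eodd_neg_neg (a b : ℤ) :
    Eodd n k (-b) (-a) =
      Fin.revPerm.permMatrix k * (Eodd n k a b)ᵀ * Fin.revPerm.permMatrix k := by
  ext p q
  rw [permMatrix_revPerm_mul_mul_apply, transpose_apply, Eodd_apply, Eodd_apply, basisPos_neg,
    basisPos_neg]
  simp only [Fin.val_rev]
  congr 1
  apply propext
  omega

theorem Jodd_eq_permMatrix_revPerm : Jodd n k = Fin.revPerm.permMatrix k := by
  ext p q
  have hterm : ∀ a ∈ Finset.Icc 1 n,
      Eodd n k (a : ℤ) (-(a : ℤ)) p q + Eodd n k (-(a : ℤ)) (a : ℤ) p q =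
        (if a = (p : ℕ) + 1 then if (p : ℕ) + q = 2 * n then 1 else 0 else 0) +
        (if a = (q : ℕ) + 1 then if (p : ℕ) + q = 2 * n then 1 else 0 else 0) := by
    intro a ha
    rw [Finset.mem_Icc] at ha
    simp only [Eodd_apply, basisPos]
    split_ifs <;> first | omega | simp
  simp only [Jodd, Matrix.add_apply, Matrix.sum_apply]
  rw [Finset.sum_congr rfl hterm, Finset.sum_add_distrib, Finset.sum_ite_eq', Finset.sum_ite_eq',
    Eodd_apply, permMatrix_revPerm_apply]
  simp only [Finset.mem_Icc, basisPos]
  split_ifs <;> first | omega | simp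

def subregularUpper (n i : ℕ) (k : Type*) [Field k] :
    Matrix (Fin (2 * n + 1)) (Fin (2 * n + 1)) k :=
  (∑ j ∈ (Finset.Icc 1 (n - 1)).erase i, Eodd n k (j : ℤ) ((j : ℤ) + 1)) +
    Eodd n k (n : ℤ) 0 + Eodd n k (i : ℤ) ((i : ℤ) + 2)

def upperEntry (k : Type*) [Field k] (n i p q : ℕ) : k :=
  if (q = p + 1 ∧ q ≤ n ∧ q ≠ i) ∨ (p + 1 = i ∧ q = i + 1) then 1 else 0

def subregularEntry (k : Type*) [Field k] (n i p q : ℕ) : k :=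
  upperEntry k n i p q - upperEntry k n i (2 * n - q) (2 * n - p)

theorem eq_subregularUpper_sub {e : Matrix (Fin (2 * n + 1)) (Fin (2 * n + 1)) k}
    (he : e = (∑ j ∈ (Finset.Icc 1 (n - 1)).erase i,
        (Eodd n k (j : ℤ) ((j : ℤ) + 1) - Eodd n k (-((j : ℤ) + 1)) (-(j : ℤ)))) +
      (Eodd n k (n : ℤ) 0 - Eodd n k 0 (-(n : ℤ))) +
      (Eodd n k (i : ℤ) ((i : ℤ) + 2) - Eodd n k (-((i : ℤ) + 2)) (-(i : ℤ)))) :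
    e = subregularUpper n i k -
      Fin.revPerm.permMatrix k * (subregularUpper n i k)ᵀ * Fin.revPerm.permMatrix k := by
  have h0 := Eodd_neg_neg (n := n) (k := k) (n : ℤ) 0
  rw [neg_zero] at h0
  simp only [he, Eodd_neg_neg, h0, subregularUpper, transpose_add, transpose_sum, Matrix.mul_add,
    Matrix.add_mul, Finset.mul_sum, Finset.sum_mul, Finset.sum_sub_distrib]
  abel

theorem subregularUpper_apply (hi1 : 1 ≤ i) (hin : i < n) (p q : Fin (2 * n + 1)) :
    subregularUpper n i k p q = upperEntry k n i p q := by
  have hterm : ∀ j ∈ (Finset.Icc 1 (n - 1)).erase i, Eodd n k (j : ℤ) ((j : ℤ) + 1) p q =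
      if j = (q : ℕ) then if (p : ℕ) + 1 = q then 1 else 0 else 0 := by
    intro j hj
    rw [Finset.mem_erase, Finset.mem_Icc] at hj
    rw [Eodd_apply, basisPos_of_pos (by omega), basisPos_of_pos (by omega)]
    split_ifs <;> first | omega | rfl
  simp only [subregularUpper, Matrix.add_apply, Matrix.sum_apply]
  rw [Finset.sum_congr rfl hterm, Finset.sum_ite_eq']
  rw [Eodd_apply, Eodd_apply, basisPos_zero, basisPos_of_pos (a := n) (by omega),
    basisPos_of_pos (a := i) (by omega), basisPos_of_pos (a := i + 2) (by omega)]
  simp only [Finset.mem_erase, Finset.mem_Icc, upperEntry]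
  split_ifs <;> first | omega | simp

theorem subregular_apply (hi1 : 1 ≤ i) (hin : i < n)
    {e : Matrix (Fin (2 * n + 1)) (Fin (2 * n + 1)) k}
    (he : e = subregularUpper n i k -
      Fin.revPerm.permMatrix k * (subregularUpper n i k)ᵀ * Fin.revPerm.permMatrix k)
    (p q : Fin (2 * n + 1)) : e p q = subregularEntry k n i p q := by
  rw [he, Matrix.sub_apply, permMatrix_revPerm_mul_mul_apply, transpose_apply,
    subregularUpper_apply hi1 hin, subregularUpper_apply hi1 hin, subregularEntry, Fin.val_rev,
    Fin.val_rev]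
  congr 2 <;> omega

def height (n i q : ℕ) : ℕ := if q < i then q else if q ≤ 2 * n - i then q - 1 else q - 2

theorem height_lt_height_of_subregularEntry_ne_zero (hi1 : 2 ≤ i) (hin : i + 2 ≤ n) {p q : ℕ}
    (hp : p ≤ 2 * n) (hq : q ≤ 2 * n) (h : subregularEntry k n i p q ≠ 0) :
    height n i p < height n i q := by
  unfold subregularEntry upperEntry at h
  unfold height
  split_ifs at h ⊢ <;> first | omega | simp at h

-- `Pi.single` indexed by `ℕ`, so that positions can be computed with `omega`.
def basisVec (N q : ℕ) : Fin N → k := fun p => if (p : ℕ) = q then 1 else 0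

theorem mulVec_basisVec {N q : ℕ} (hq : q < N) (M : Matrix (Fin N) (Fin N) k) :
    M *ᵥ basisVec N q = fun p => M p ⟨q, hq⟩ := by
  rw [show (basisVec N q : Fin N → k) = Pi.single ⟨q, hq⟩ 1 by
    ext p; simp [basisVec, Pi.single_apply, Fin.ext_iff], mulVec_single_one]
  rfl

def subregularKernelVec (k : Type*) [Field k] (n i : ℕ) : Fin 3 → Fin (2 * n + 1) → k :=
  ![basisVec _ 0, basisVec _ i, basisVec _ (2 * n + 1 - i) - basisVec _ (2 * n - i)]

theorem linearIndependent_subregularKernelVec (hi1 : 1 ≤ i) (hin : i < n) :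
    LinearIndependent k (subregularKernelVec k n i) := by
  rw [Fintype.linearIndependent_iff]
  intro g hg
  have h0 := congrFun hg ⟨0, by omega⟩
  have h1 := congrFun hg ⟨i, by omega⟩
  have h2 := congrFun hg ⟨2 * n + 1 - i, by omega⟩
  simp [subregularKernelVec, Fin.sum_univ_three, basisVec, show 0 ≠ i by omega,
    show 0 ≠ 2 * n + 1 - i by omega, show 0 ≠ 2 * n - i by omega, show i ≠ 0 by omega,
    show i ≠ 2 * n + 1 - i by omega, show i ≠ 2 * n - i by omega,
    show 2 * n + 1 - i ≠ 0 by omega, show 2 * n + 1 - i ≠ i by omega,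
    show 2 * n + 1 - i ≠ 2 * n - i by omega] at h0 h1 h2
  intro j
  fin_cases j <;> simpa

variable {e : Matrix (Fin (2 * n + 1)) (Fin (2 * n + 1)) k}

theorem mulVec_basisVec_of_entry (hE : ∀ p q, e p q = subregularEntry k n i p q) {q : ℕ}
    (hq : q ≤ 2 * n) :
    e *ᵥ basisVec _ q = fun p : Fin (2 * n + 1) => subregularEntry k n i p q := by
  rw [mulVec_basisVec (by omega)]
  ext p
  exact hE p _

variable (hi1 : 2 ≤ i) (hin : i + 2 ≤ n) (hE : ∀ p q, e p q = subregularEntry k n i p q)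
include hi1 hin hE

theorem subregular_mulVec_basisVec_eq_zero {q : ℕ} (hq : q = 0 ∨ q = i) :
    e *ᵥ basisVec _ q = 0 := by
  rw [mulVec_basisVec_of_entry hE (by omega)]
  ext p
  simp only [subregularEntry, upperEntry, Pi.zero_apply]
  split_ifs <;> first | omega | simp

theorem subregular_mulVec_basisVec {q : ℕ} (hq1 : 1 ≤ q) (hq2 : q ≤ 2 * n) (hqi : q ≠ i)
    (hqi' : q ≠ i + 1) (hqr : q ≠ 2 * n + 1 - i) :
    e *ᵥ basisVec _ q = basisVec _ (q - 1) ∨ e *ᵥ basisVec _ q = -basisVec _ (q - 1) := by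
  rw [mulVec_basisVec_of_entry hE hq2]
  by_cases hqn : q ≤ n
  · left
    ext p
    simp only [subregularEntry, upperEntry, basisVec]
    split_ifs <;> first | omega | simp
  · right
    ext p
    simp only [subregularEntry, upperEntry, basisVec, Pi.neg_apply]
    split_ifs <;> first | omega | simp

theorem subregular_mulVec_basisVec_succ :
    e *ᵥ basisVec _ (i + 1) = basisVec _ (i - 1) + basisVec _ i := by
  rw [mulVec_basisVec_of_entry hE (by omega)]
  ext p
  simp only [subregularEntry, upperEntry, basisVec, Pi.add_apply, and_true]
  split_ifs <;> first | omega | simp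

theorem subregular_mulVec_basisVec_reflect_succ :
    e *ᵥ basisVec _ (2 * n + 1 - i) = -basisVec _ (2 * n - 1 - i) := by
  rw [mulVec_basisVec_of_entry hE (by omega)]
  ext p
  simp only [subregularEntry, upperEntry, basisVec, Pi.neg_apply]
  split_ifs <;> first | omega | simp

theorem subregular_mulVec_basisVec_reflect :
    e *ᵥ basisVec _ (2 * n - i) = -basisVec _ (2 * n - 1 - i) := by
  rw [mulVec_basisVec_of_entry hE (by omega)]
  ext p
  simp only [subregularEntry, upperEntry, basisVec, Pi.neg_apply]
  split_ifs <;> first | omega | simp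

def chainIndex (n i m : ℕ) : ℕ :=
  if m < i then m else if m ≤ 2 * n - 2 - i then m + 1 else m + 2

/-- The Jordan chain of the block of size `2n - 1`, from `v_0` up to `v_{2n}`. -/
def chainVec (n i m : ℕ) : Fin (2 * n + 1) → k :=
  basisVec _ (chainIndex n i m) + if m + 1 = i then basisVec _ i else 0

theorem subregular_mulVec_chainVec_succ {m : ℕ} (hm : m + 1 ≤ 2 * n - 2) :
    e *ᵥ chainVec n i (m + 1) = chainVec n i m ∨
      e *ᵥ chainVec n i (m + 1) = -chainVec n i m := by
  have hcol : e *ᵥ chainVec n i (m + 1) = e *ᵥ basisVec _ (chainIndex n i (m + 1)) := by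
    rw [chainVec, mulVec_add]
    split_ifs
    · rw [subregular_mulVec_basisVec_eq_zero hi1 hin hE (Or.inr rfl), add_zero]
    · rw [mulVec_zero, add_zero]
  rw [hcol]
  by_cases hmi : m + 1 = i
  · left
    rw [chainVec, if_pos hmi,
      show chainIndex n i (m + 1) = i + 1 by unfold chainIndex; split_ifs <;> omega,
      show chainIndex n i m = i - 1 by unfold chainIndex; split_ifs <;> omega,
      subregular_mulVec_basisVec_succ hi1 hin hE]
  rw [chainVec, if_neg hmi, add_zero]
  by_cases hmr : m + 1 = 2 * n - 1 - i
  · right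
    rw [show chainIndex n i (m + 1) = 2 * n + 1 - i by unfold chainIndex; split_ifs <;> omega,
      show chainIndex n i m = 2 * n - 1 - i by unfold chainIndex; split_ifs <;> omega,
      subregular_mulVec_basisVec_reflect_succ hi1 hin hE]
  obtain ⟨hc1, hc2, hci, hci', hcr, hpred⟩ : 1 ≤ chainIndex n i (m + 1) ∧
      chainIndex n i (m + 1) ≤ 2 * n ∧ chainIndex n i (m + 1) ≠ i ∧
      chainIndex n i (m + 1) ≠ i + 1 ∧ chainIndex n i (m + 1) ≠ 2 * n + 1 - i ∧
      chainIndex n i m = chainIndex n i (m + 1) - 1 := by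
    unfold chainIndex; split_ifs <;> omega
  rw [hpred]
  exact subregular_mulVec_basisVec hi1 hin hE hc1 hc2 hci hci' hcr

theorem subregular_pow_ne_zero : e ^ (2 * n - 2) ≠ 0 := by
  intro h
  rcases e.pow_mulVec_eq_or_eq_neg (fun m hm => subregular_mulVec_chainVec_succ hi1 hin hE
    (by omega)) (2 * n - 2) le_rfl with hu | hu <;>
  · have h0 := congrFun hu ⟨0, by omega⟩
    simp [h, chainVec, chainIndex, basisVec, show (1 : ℕ) ≠ i by omega] at h0
    omega

theorem subregular_pow_eq_zero : e ^ (2 * n - 1) = 0 :=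
  e.pow_eq_zero_of_weight_lt (fun q => height n i q)
    (fun p q h => height_lt_height_of_subregularEntry_ne_zero hi1 hin (by omega) (by omega)
      (hE p q ▸ h))
    (fun q => by have := q.isLt; unfold height; split_ifs <;> omega)

theorem subregular_rank_le : e.rank ≤ 2 * n - 2 := by
  have hker (j : Fin 3) : e *ᵥ subregularKernelVec k n i j = 0 := by
    fin_cases j
    · exact subregular_mulVec_basisVec_eq_zero hi1 hin hE (Or.inl rfl)
    · exact subregular_mulVec_basisVec_eq_zero hi1 hin hE (Or.inr rfl)
    · simp [subregularKernelVec, mulVec_sub, subregular_mulVec_basisVec_reflect_succ hi1 hin hE,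
        subregular_mulVec_basisVec_reflect hi1 hin hE]
  have := rank_add_card_le_of_mulVec_eq_zero
    (linearIndependent_subregularKernelVec (by omega) (by omega)) hker
  rw [Fintype.card_fin] at this
  omega

end Subregular

theorem subregular_so_odd_interior_node_general {k : Type*} [Field k]
    {n i : ℕ} (hi1 : 2 ≤ i) (hi2 : i ≤ n - 2)
    (e : Matrix (Fin (2 * n + 1)) (Fin (2 * n + 1)) k)
    (he : e = (∑ j ∈ (Finset.Icc 1 (n - 1)).erase i,
        (Eodd n k (j : ℤ) ((j : ℤ) + 1) - Eodd n k (-((j : ℤ) + 1)) (-(j : ℤ)))) +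
      (Eodd n k (n : ℤ) 0 - Eodd n k 0 (-(n : ℤ))) +
      (Eodd n k (i : ℤ) ((i : ℤ) + 2) - Eodd n k (-((i : ℤ) + 2)) (-(i : ℤ)))) :
    eᵀ * Jodd n k + Jodd n k * e = 0 ∧
    e ^ (2 * n - 1) = 0 ∧ e ^ (2 * n - 2) ≠ 0 ∧
    e.rank = 2 * n - 2 := by
  have hin : i + 2 ≤ n := by omega
  have he' := eq_subregularUpper_sub he
  have hE := subregular_apply (by omega) (by omega) he'
  have hnil : e ^ (2 * n - 1) = 0 := subregular_pow_eq_zero hi1 hin hE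
  have hne : e ^ (2 * n - 2) ≠ 0 := subregular_pow_ne_zero hi1 hin hE
  refine ⟨?_, hnil, hne, (subregular_rank_le hi1 hin hE).antisymm
    (le_rank_of_pow_ne_zero hne (by rwa [show 2 * n - 2 + 1 = 2 * n - 1 by omega]))⟩
  have hskew : eᵀ * Jodd n k = Jodd n k * -e := by
    rw [he', Jodd_eq_permMatrix_revPerm]
    exact isSkewAdjoint_sub_mul_transpose_mul permMatrix_revPerm_transpose
      permMatrix_revPerm_mul_self _
  rw [hskew, Matrix.mul_neg, neg_add_cancel]

/-- For `n ≥ 4`, `2 ≤ i ≤ n-2` and `char k ≠ 2`, the matrix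
`e = Σ_{j=1, j≠i}^{n-1} (E_{j,j+1} - E_{-(j+1),-j}) + (E_{n,0} - E_{0,-n})
      + (E_{i,i+2} - E_{-(i+2),-i})`
lies in `so_{2n+1}(k)`, satisfies `e^{2n-1} = 0`, `e^{2n-2} ≠ 0` and `rank e = 2n - 2`;
consequently `e` is nilpotent of Jordan type `(2n-1, 1, 1)`, i.e. `e` lies in the
subregular nilpotent orbit of `so_{2n+1}(k)`. -/
theorem subregular_so_odd_interior_node {k : Type*} [Field k] [IsAlgClosed k]
    (hchar : ringChar k ≠ 2) {n i : ℕ} (hn : 4 ≤ n) (hi1 : 2 ≤ i) (hi2 : i ≤ n - 2)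
    (e : Matrix (Fin (2 * n + 1)) (Fin (2 * n + 1)) k)
    (he : e = (∑ j ∈ (Finset.Icc 1 (n - 1)).erase i,
        (Eodd n k (j : ℤ) ((j : ℤ) + 1) - Eodd n k (-((j : ℤ) + 1)) (-(j : ℤ)))) +
      (Eodd n k (n : ℤ) 0 - Eodd n k 0 (-(n : ℤ))) +
      (Eodd n k (i : ℤ) ((i : ℤ) + 2) - Eodd n k (-((i : ℤ) + 2)) (-(i : ℤ)))) :
    eᵀ * Jodd n k + Jodd n k * e = 0 ∧
    e ^ (2 * n - 1) = 0 ∧ e ^ (2 * n - 2) ≠ 0 ∧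
    e.rank = 2 * n - 2 :=
  subregular_so_odd_interior_node_general hi1 hi2 e he
end
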